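/- arXiv:1109.2776 — 7 statements merged into one kernel-verified Lean document; each statement's English description precedes it below -/
import Mathlib

section
/- Let n ≥ 4 and L > 2n be integers. For every subset S ⊆ Λ_L with |S| = n², the number of unordered adjacent pairs contained in S satisfies e(S) ≤ 2n(n−1); equivalently, every configuration with n² particles has Hamiltonian H ≥ −2n(n−1). -/
open scoped Classical

noncomputable section

/-- A site of the discrete torus `Λ_L`. -/
abbrev Site (L : ℕ) := ZMod L × ZMod L

/-- Two sites of the discrete torus are adjacent if their difference is a unit vector. -/
def torusAdj (L : ℕ) (u v : Site L) : Prop :=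
  u - v = (1, 0) ∨ u - v = (-1, 0) ∨ u - v = (0, 1) ∨ u - v = (0, -1)

/-- `e(S)`: the number of unordered pairs of adjacent sites contained in `S`. -/
def torusE (L : ℕ) (S : Finset (Site L)) : ℕ :=
  ((S ×ˢ S).filter fun p => torusAdj L p.1 p.2).card / 2

/-!
Count the bonds of `S` line by line. A nonempty, non-full line of the cycle `ZMod L` with `k`
occupied sites carries at most `k - 1` bonds. Summing over rows and over columns gives
`e(S) ≤ 2|S| - (h + w) + (r + c)`, where `h`, `w` count the occupied rows and columns and `r`, `c`
the full ones. Now `n² = |S| ≤ w h`, so `h + w ≥ 2n` by AM-GM; a full row forces `w = L > 2n`,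
while `r L ≤ n²` forces `2r ≤ n`; in every case `h + w ≥ 2n + r + c`.
-/

open Finset

namespace LatticeGas

section Rows

variable {α β : Type*} [DecidableEq α] [DecidableEq β]

lemma card_le_card_image_fst_mul_card_image_snd (S : Finset (α × β)) :
    #S ≤ #(S.image Prod.fst) * #(S.image Prod.snd) :=
  card_product _ _ ▸ card_le_card subset_product

variable [Fintype α]

def row (S : Finset (α × β)) (b : β) : Finset α := {a | (a, b) ∈ S}

variable [Fintype β]

def fullRows (S : Finset (α × β)) : Finset β := {b | row S b = univ}

lemma card_image_fst_of_fullRows_nonempty {S : Finset (α × β)} (h : (fullRows S).Nonempty) :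
    #(S.image Prod.fst) = Fintype.card α := by
  obtain ⟨b, hb⟩ := h
  rw [fullRows, mem_filter, eq_univ_iff_forall] at hb
  rw [← card_univ,
    eq_univ_of_forall fun a => mem_image.2 ⟨(a, b), (mem_filter.1 (hb.2 a)).2, rfl⟩]

lemma card_eq_sum_card_row (S : Finset (α × β)) : #S = ∑ b, #(row S b) := by
  simp only [row, card_filter]
  rw [← Fintype.sum_prod_type_right (f := fun p => if p ∈ S then 1 else 0), ← card_filter,
    filter_univ_mem]

lemma card_fullRows_mul_le (S : Finset (α × β)) : #(fullRows S) * Fintype.card α ≤ #S :=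
  calc #(fullRows S) * Fintype.card α = ∑ b ∈ fullRows S, #(row S b) := by
        rw [sum_congr rfl fun b hb => by rw [(mem_filter.1 hb).2, card_univ], sum_const,
          smul_eq_mul]
    _ ≤ ∑ b, #(row S b) := sum_le_sum_of_subset (subset_univ _)
    _ = #S := (card_eq_sum_card_row S).symm

lemma image_snd_eq_filter_row_nonempty (S : Finset (α × β)) :
    S.image Prod.snd = ({b | (row S b).Nonempty} : Finset β) := by
  ext b; simp [row, Finset.Nonempty]

lemma fullRows_subset_image_snd [Nonempty α] (S : Finset (α × β)) :
    fullRows S ⊆ S.image Prod.snd := by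
  intro b hb
  simp_all [fullRows, row, eq_univ_iff_forall]

end Rows

def bonds {G : Type*} [Add G] [DecidableEq G] (S : Finset G) (d : G) : Finset G :=
  {v ∈ S | v + d ∈ S}

section Cycle

variable {L : ℕ} [NeZero L]

lemma eq_univ_of_add_one_mem {T : Finset (ZMod L)} (hne : T.Nonempty)
    (hT : ∀ x ∈ T, x + 1 ∈ T) : T = univ := by
  obtain ⟨x₀, hx₀⟩ := hne
  have hshift (k : ℕ) : x₀ + k ∈ T := by
    induction k with
    | zero => simpa using hx₀
    | succ k ih => simpa [add_assoc] using hT _ ih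
  refine eq_univ_of_forall fun y => ?_
  obtain ⟨k, hk⟩ := ZMod.natCast_zmod_surjective (y - x₀)
  simpa [hk] using hshift k

lemma card_bonds_one_lt {T : Finset (ZMod L)} (hne : T.Nonempty) (hT : T ≠ univ) :
    #(bonds T 1) < #T := by
  refine card_lt_card (filter_ssubset.2 ?_)
  by_contra! h
  exact hT (eq_univ_of_add_one_mem hne h)

lemma sum_card_bonds_add_card_nonempty_le {ι : Type*} [Fintype ι] (T : ι → Finset (ZMod L)) :
    ∑ i, #(bonds (T i) 1) + #{i | (T i).Nonempty} ≤ ∑ i, #(T i) + #{i | T i = univ} := by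
  simp only [card_filter, ← sum_add_distrib]
  refine sum_le_sum fun i _ => ?_
  by_cases hfull : T i = univ
  · have : #(bonds (T i) 1) ≤ #(T i) := card_filter_le _ _
    split_ifs <;> omega
  rcases (T i).eq_empty_or_nonempty with hempty | hne
  · simp [hempty, bonds]
  · have := card_bonds_one_lt hne hfull
    simp only [if_pos hne, if_neg hfull]
    omega

end Cycle

section Transpose

variable {α β : Type*} [DecidableEq α] [DecidableEq β]

lemma image_swap_image_fst (S : Finset (α × β)) :
    (S.image Prod.swap).image Prod.fst = S.image Prod.snd := by
  simp [image_image, Function.comp_def]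

lemma image_swap_image_snd (S : Finset (α × β)) :
    (S.image Prod.swap).image Prod.snd = S.image Prod.fst := by
  simp [image_image, Function.comp_def]

lemma card_image_swap (S : Finset (α × β)) : #(S.image Prod.swap) = #S :=
  card_image_of_injective _ Prod.swap_injective

lemma card_bonds_image_swap [Add α] [Add β] (S : Finset (α × β)) (d : β × α) :
    #(bonds (S.image Prod.swap) d) = #(bonds S d.swap) := by
  have : bonds (S.image Prod.swap) d = (bonds S d.swap).image Prod.swap := by
    obtain ⟨d₁, d₂⟩ := d
    ext ⟨a, b⟩
    simp [bonds]
  rw [this, card_image_swap]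

end Transpose

section Torus

variable {L : ℕ}

lemma row_bonds {β : Type*} [Fintype β] [DecidableEq β] [AddZeroClass β] [NeZero L]
    (S : Finset (ZMod L × β)) (y : β) : row (bonds S (1, 0)) y = bonds (row S y) 1 := by
  ext x
  simp [row, bonds]

lemma card_bonds_add_card_image_snd_le {β : Type*} [Fintype β] [DecidableEq β] [AddZeroClass β]
    [NeZero L] (S : Finset (ZMod L × β)) :
    #(bonds S (1, 0)) + #(S.image Prod.snd) ≤ #S + #(fullRows S) := by
  rw [card_eq_sum_card_row (bonds S _), card_eq_sum_card_row S,
    image_snd_eq_filter_row_nonempty, fullRows]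
  simp only [row_bonds]
  exact sum_card_bonds_add_card_nonempty_le (row S)

lemma mem_image_bonds_of_sub_eq {G : Type*} [AddCommGroup G] [DecidableEq G] {S : Finset G}
    {u v d : G} (hu : u ∈ S) (hv : v ∈ S) (h : u - v = d) :
    (u, v) ∈ (bonds S d).image fun w => (w + d, w) := by
  subst h
  exact mem_image.2 ⟨v, mem_filter.2 ⟨hv, by rwa [add_sub_cancel]⟩, by rw [add_sub_cancel]⟩

lemma mem_image_bonds_of_sub_eq_neg {G : Type*} [AddCommGroup G] [DecidableEq G] {S : Finset G}
    {u v d : G} (hu : u ∈ S) (hv : v ∈ S) (h : u - v = -d) :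
    (u, v) ∈ (bonds S d).image fun w => (w, w + d) := by
  rw [← neg_sub, neg_inj] at h
  subst h
  exact mem_image.2 ⟨u, mem_filter.2 ⟨hu, by rwa [add_sub_cancel]⟩, by rw [add_sub_cancel]⟩

lemma torusE_le (S : Finset (Site L)) :
    torusE L S ≤ #(bonds S (1, 0)) + #(bonds S (0, 1)) := by
  set H := bonds S (1, 0)
  set V := bonds S (0, 1)
  have hsub : (S ×ˢ S).filter (fun p => torusAdj L p.1 p.2) ⊆
      H.image (fun v => (v + (1, 0), v)) ∪ H.image (fun v => (v, v + (1, 0))) ∪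
        V.image (fun v => (v + (0, 1), v)) ∪ V.image (fun v => (v, v + (0, 1))) := by
    rintro ⟨u, v⟩ huv
    rw [mem_filter, mem_product] at huv
    obtain ⟨⟨hu, hv⟩, h | h | h | h⟩ := huv
    · exact mem_union_left _ (mem_union_left _ (mem_union_left _
        (mem_image_bonds_of_sub_eq hu hv h)))
    · exact mem_union_left _ (mem_union_left _ (mem_union_right _
        (mem_image_bonds_of_sub_eq_neg hu hv (by simpa using h))))
    · exact mem_union_left _ (mem_union_right _ (mem_image_bonds_of_sub_eq hu hv h))
    · exact mem_union_right _ (mem_image_bonds_of_sub_eq_neg hu hv (by simpa using h))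
  have hcard := card_le_card hsub
  grw [card_union_le, card_union_le, card_union_le, card_image_le, card_image_le, card_image_le,
    card_image_le] at hcard
  unfold torusE
  omega

lemma two_mul_le_add_of_sq_le_mul {n a b : ℕ} (h : n ^ 2 ≤ a * b) : 2 * n ≤ a + b := by
  nlinarith [sq_nonneg ((a : ℤ) - b)]

lemma two_mul_add_card_fullRows_add_le [NeZero L] {n : ℕ} (hL : 2 * n < L)
    (S : Finset (Site L)) (hS : #S = n ^ 2) :
    2 * n + #(fullRows S) + #(fullRows (S.image Prod.swap)) ≤
      #(S.image Prod.fst) + #(S.image Prod.snd) := by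
  set T := S.image Prod.swap
  have hT : #T = n ^ 2 := (card_image_swap S).trans hS
  have hwh : n ^ 2 ≤ #(S.image Prod.fst) * #(S.image Prod.snd) :=
    hS ▸ card_le_card_image_fst_mul_card_image_snd S
  have hfr : #(fullRows S) * L ≤ n ^ 2 := by simpa [hS] using card_fullRows_mul_le S
  have hfc : #(fullRows T) * L ≤ n ^ 2 := by simpa [hT] using card_fullRows_mul_le T
  have hfrh : #(fullRows S) ≤ #(S.image Prod.snd) := card_le_card (fullRows_subset_image_snd S)
  have hfcw : #(fullRows T) ≤ #(S.image Prod.fst) :=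
    image_swap_image_snd S ▸ card_le_card (fullRows_subset_image_snd T)
  have full_row (U : Finset (Site L)) (hU : 0 < #(fullRows U)) : #(U.image Prod.fst) = L :=
    (card_image_fst_of_fullRows_nonempty (card_pos.1 hU)).trans (ZMod.card L)
  rcases (#(fullRows S)).eq_zero_or_pos with hfr0 | hfr0 <;>
    rcases (#(fullRows T)).eq_zero_or_pos with hfc0 | hfc0
  · have := two_mul_le_add_of_sq_le_mul hwh
    omega
  · have := image_swap_image_fst S ▸ full_row T hfc0
    omega
  · have := full_row S hfr0
    omega
  · have := image_swap_image_fst S ▸ full_row T hfc0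
    have := full_row S hfr0
    have : 2 * #(fullRows S) ≤ n := by nlinarith
    have : 2 * #(fullRows T) ≤ n := by nlinarith
    omega

end Torus

end LatticeGas

open LatticeGas

theorem energy_lower_bound_general (n L : ℕ) (hL : 2 * n < L)
    (S : Finset (Site L)) (hS : S.card = n ^ 2) :
    torusE L S ≤ 2 * n * (n - 1) := by
  have : NeZero L := ⟨by omega⟩
  have horizontal := card_bonds_add_card_image_snd_le S
  have vertical := card_bonds_add_card_image_snd_le (S.image Prod.swap)
  rw [card_image_swap, image_swap_image_snd, card_bonds_image_swap, Prod.swap_prod_mk] at vertical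
  have := two_mul_add_card_fullRows_add_le hL S hS
  have := torusE_le S
  rw [Nat.mul_sub_one, mul_assoc, ← sq]
  omega

/-- for `n ≥ 4` and `L > 2n`, every set of `n²` sites of the torus contains
at most `2n(n−1)` adjacent pairs, i.e. every configuration with `n²` particles has
Hamiltonian `H ≥ −2n(n−1)`. -/
theorem energy_lower_bound (n L : ℕ) (hn : 4 ≤ n) (hL : 2 * n < L)
    (S : Finset (Site L)) (hS : S.card = n ^ 2) :
    torusE L S ≤ 2 * n * (n - 1) :=
  energy_lower_bound_general n L hL S hS
end
end

section
/- Let n ≥ 4 and L > 2n be integers, and let S ⊆ Λ_L satisfy |S| = n² and e(S) = 2n(n−1). Then S = x + {0,…,n−1}² for some x ∈ Λ_L; that is, the only configurations with n² particles achieving the minimal energy −2n(n−1) are the square configurations η^x. -/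
open scoped Classical

noncomputable section

/-- The occupied set `Q_x = x + {0,…,n−1}²` of the square configuration `η^x`. -/
def squareSet (L n : ℕ) (x : Site L) : Finset (Site L) :=
  (Finset.range n ×ˢ Finset.range n).image fun p => x + ((p.1 : ZMod L), (p.2 : ZMod L))

/-!
Every bond of `S` joins a site `u` to `u - (1, 0)` or to `u - (0, 1)`, so `e(S) ≤ h + v`, the
numbers of horizontal and vertical bonds. A column of `S` that is a nonempty proper subset of
the cycle `ZMod L` carries fewer vertical bonds than sites, so `v + c ≤ |S| + f`, where `c`
counts the occupied columns and `f` the full ones; symmetrically `h + r ≤ |S| + g` for rows.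
With `|S| = n²` and `e(S) = 2n(n - 1)` this gives `c + r ≤ 2n + f + g`. A full column meets
every row, and `f L ≤ n²`; since `L > 2n` this rules out full lines, so `c + r ≤ 2n` while
`n² ≤ c r`. Hence `c = r = n` and `S` is the product of its two projections. Each projection
then has `n` sites and, by the bond count, `n - 1` bonds, so it is an arc of the cycle, and
`S` is a square.
-/

open Finset

namespace MinimalEnergy

lemma full_line_counts_eq_zero {n L c r f g : ℕ} (hL : 2 * n < L) (hsum : c + r ≤ 2 * n + f + g)
    (hf : f * L ≤ n ^ 2) (hg : g * L ≤ n ^ 2) (hfc : f ≤ c) (hgr : g ≤ r)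
    (hfr : f ≠ 0 → r = L) (hgc : g ≠ 0 → c = L) : f = 0 ∧ g = 0 := by
  by_cases hf0 : f = 0 <;> by_cases hg0 : g = 0
  · exact ⟨hf0, hg0⟩
  · have := hgc hg0; omega
  · have := hfr hf0; omega
  · have := hfr hf0
    have := hgc hg0
    nlinarith

lemma eq_and_eq_of_add_le_of_sq_le_mul {n c r : ℕ} (hsum : c + r ≤ 2 * n) (hcr : n ^ 2 ≤ c * r) :
    c = n ∧ r = n := by
  have : c = r := by nlinarith
  subst this
  constructor <;> nlinarith

variable {L : ℕ}

def bondCount (T : Finset (ZMod L)) : ℕ := #(T.filter fun t => t - 1 ∈ T)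

def vBonds (S : Finset (Site L)) : ℕ := #(S.filter fun u => u - (0, 1) ∈ S)

def hBonds (S : Finset (Site L)) : ℕ := #(S.filter fun u => u - (1, 0) ∈ S)

lemma bondCount_le_card (T : Finset (ZMod L)) : bondCount T ≤ #T := card_filter_le _ _

lemma torusE_le_hBonds_add_vBonds (S : Finset (Site L)) : torusE L S ≤ hBonds S + vBonds S := by
  let bonds (e : Site L) := S.filter fun u => u - e ∈ S
  have hsub : (S ×ˢ S).filter (fun p => torusAdj L p.1 p.2) ⊆
      ((bonds (1, 0)).image (fun u => (u, u - (1, 0))) ∪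
        (bonds (1, 0)).image (fun u => (u - (1, 0), u))) ∪
      ((bonds (0, 1)).image (fun u => (u, u - (0, 1))) ∪
        (bonds (0, 1)).image (fun u => (u - (0, 1), u))) := by
    rintro ⟨u, v⟩ huv
    rw [mem_filter, mem_product] at huv
    obtain ⟨⟨hu, hv⟩, h | h | h | h⟩ := huv <;> dsimp only at hu hv h <;>
      simp only [mem_union, mem_image]
    · obtain rfl : v = u - (1, 0) := by rw [← h, sub_sub_cancel]
      exact Or.inl (Or.inl ⟨u, mem_filter.mpr ⟨hu, hv⟩, rfl⟩)
    · obtain rfl : u = v - (1, 0) := by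
        rw [← neg_sub, neg_eq_iff_eq_neg, Prod.neg_mk, neg_neg, neg_zero] at h
        rw [← h, sub_sub_cancel]
      exact Or.inl (Or.inr ⟨v, mem_filter.mpr ⟨hv, hu⟩, rfl⟩)
    · obtain rfl : v = u - (0, 1) := by rw [← h, sub_sub_cancel]
      exact Or.inr (Or.inl ⟨u, mem_filter.mpr ⟨hu, hv⟩, rfl⟩)
    · obtain rfl : u = v - (0, 1) := by
        rw [← neg_sub, neg_eq_iff_eq_neg, Prod.neg_mk, neg_neg, neg_zero] at h
        rw [← h, sub_sub_cancel]
      exact Or.inr (Or.inr ⟨v, mem_filter.mpr ⟨hv, hu⟩, rfl⟩)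
  have := (card_le_card hsub).trans ((card_union_le _ _).trans (add_le_add
    ((card_union_le _ _).trans (add_le_add card_image_le card_image_le))
    ((card_union_le _ _).trans (add_le_add card_image_le card_image_le))))
  rw [torusE]
  change _ ≤ #(bonds (1, 0)) + #(bonds (0, 1))
  omega

lemma hBonds_eq_vBonds_image_swap (S : Finset (Site L)) :
    hBonds S = vBonds (S.image Prod.swap) := by
  rw [hBonds, vBonds, ← card_image_of_injective _ Prod.swap_injective]
  congr 1
  ext ⟨a, b⟩
  simp [and_comm]

lemma vBonds_product (A B : Finset (ZMod L)) : vBonds (A ×ˢ B) = #A * bondCount B := by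
  rw [vBonds, bondCount, ← card_product]
  congr 1
  ext ⟨a, b⟩
  simp only [mem_filter, mem_product, Prod.mk_sub_mk, sub_zero]
  tauto

lemma hBonds_product (A B : Finset (ZMod L)) : hBonds (A ×ˢ B) = bondCount A * #B := by
  rw [hBonds_eq_vBonds_image_swap, image_swap_product, vBonds_product, mul_comm]

lemma squareSet_eq_product (n : ℕ) (x : Site L) :
    squareSet L n x = (range n).image (fun k : ℕ => x.1 + (k : ZMod L)) ×ˢ
      (range n).image (fun k : ℕ => x.2 + (k : ZMod L)) :=
  prodMap_image_product (fun k : ℕ => x.1 + (k : ZMod L)) (fun k : ℕ => x.2 + (k : ZMod L)) _ _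

lemma add_natCast_injOn_range (a : ZMod L) :
    Set.InjOn (fun k : ℕ => a + (k : ZMod L)) (range L) := by
  intro j hj k hk h
  simpa [ZMod.val_cast_of_lt (mem_range.mp hj), ZMod.val_cast_of_lt (mem_range.mp hk)]
    using congrArg ZMod.val (add_left_cancel h)

variable [NeZero L]

lemma exists_mem_sub_one_notMem {T : Finset (ZMod L)} (hne : T.Nonempty) (hT : T ≠ univ) :
    ∃ t ∈ T, t - 1 ∉ T := by
  by_contra! hclosed
  obtain ⟨a, ha⟩ := hne
  have hdown : ∀ k : ℕ, a - k ∈ T := by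
    intro k
    induction k with
    | zero => simpa using ha
    | succ k ih => simpa [sub_sub] using hclosed _ ih
  refine hT (eq_univ_of_forall fun x => ?_)
  simpa using hdown (a - x).val

lemma bondCount_le_card_sub_one {T : Finset (ZMod L)} (hT : T ≠ univ) :
    bondCount T ≤ #T - 1 := by
  rcases T.eq_empty_or_nonempty with rfl | hne
  · simp [bondCount]
  obtain ⟨t, ht, ht'⟩ := exists_mem_sub_one_notMem hne hT
  have hsub : T.filter (fun s => s - 1 ∈ T) ⊆ T.erase t := fun s hs => by
    rw [mem_filter] at hs
    exact mem_erase.mpr ⟨by rintro rfl; exact ht' hs.2, hs.1⟩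
  simpa [bondCount, card_erase_of_mem ht] using card_le_card hsub

lemma add_natCast_mem_of_le_val {T : Finset (ZMod L)} {a t : ZMod L} (ha : a ∈ T)
    (hstep : ∀ s ∈ T, s ≠ a → s - 1 ∈ T) (ht : t ∈ T) {j : ℕ} (hj : j ≤ (t - a).val) :
    a + j ∈ T := by
  obtain ⟨k, hk⟩ : ∃ k, (t - a).val = k := ⟨_, rfl⟩
  induction k generalizing t j with
  | zero => simpa [Nat.le_zero.mp (hk ▸ hj)] using ha
  | succ k ih =>
    have hta : t - a = k + 1 := by rw [← ZMod.natCast_zmod_val (t - a), hk, Nat.cast_succ]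
    rcases Nat.lt_or_ge j (k + 1) with hjk | hjk
    · have htk : (t - 1 - a).val = k := by
        rw [sub_right_comm, hta, add_sub_cancel_right,
          ZMod.val_cast_of_lt (by have := ZMod.val_lt (t - a); omega)]
      have hne : t ≠ a := by rintro rfl; simp at hk
      exact ih (hstep t ht hne) (by omega) htk
    · obtain rfl : j = k + 1 := by omega
      rwa [Nat.cast_succ, ← hta, add_sub_cancel]

lemma eq_image_add_range_of_sub_one_mem {T : Finset (ZMod L)} {a : ZMod L} (ha : a ∈ T)
    (hstep : ∀ s ∈ T, s ≠ a → s - 1 ∈ T) :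
    T = (range #T).image fun k : ℕ => a + (k : ZMod L) := by
  have hlt : ∀ t ∈ T, (t - a).val < #T := fun t ht => by
    have hsub : (range ((t - a).val + 1)).image (fun k : ℕ => a + (k : ZMod L)) ⊆ T := by
      intro s hs
      obtain ⟨j, hj, rfl⟩ := mem_image.mp hs
      exact add_natCast_mem_of_le_val ha hstep ht (Nat.lt_succ_iff.mp (mem_range.mp hj))
    have hrange : range ((t - a).val + 1) ⊆ range L :=
      range_subset_range.mpr (ZMod.val_lt (t - a))
    have := card_le_card hsub
    rw [card_image_of_injOn ((add_natCast_injOn_range a).mono (by simpa using hrange)),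
      card_range] at this
    omega
  refine eq_of_subset_of_card_le (fun t ht => ?_) (card_image_le.trans (card_range _).le)
  exact mem_image.mpr ⟨(t - a).val, mem_range.mpr (hlt t ht), by simp⟩

lemma exists_eq_image_add_range {T : Finset (ZMod L)} (hT : T ≠ univ)
    (h : #T ≤ bondCount T + 1) : ∃ a, T = (range #T).image fun k : ℕ => a + (k : ZMod L) := by
  rcases T.eq_empty_or_nonempty with rfl | hne
  · exact ⟨0, by simp⟩
  have hstarts : #(T.filter fun t => t - 1 ∉ T) = 1 := by
    have hsplit := card_filter_add_card_filter_not (s := T) (p := fun t => t - 1 ∈ T)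
    obtain ⟨t, ht, ht'⟩ := exists_mem_sub_one_notMem hne hT
    have : 0 < #(T.filter fun t => t - 1 ∉ T) := card_pos.mpr ⟨t, mem_filter.mpr ⟨ht, ht'⟩⟩
    rw [bondCount] at h
    omega
  obtain ⟨a, ha⟩ := card_eq_one.mp hstarts
  refine ⟨a, eq_image_add_range_of_sub_one_mem (mem_filter.mp (ha ▸ mem_singleton_self a)).1
    fun t ht hta => ?_⟩
  by_contra h
  exact hta (mem_singleton.mp (ha ▸ mem_filter.mpr ⟨ht, h⟩))

def column (S : Finset (Site L)) (j : ZMod L) : Finset (ZMod L) := univ.filter fun i => (j, i) ∈ S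

@[simp]
lemma mem_column {S : Finset (Site L)} {j i : ZMod L} : i ∈ column S j ↔ (j, i) ∈ S := by
  simp [column]

def fullColumns (S : Finset (Site L)) : Finset (ZMod L) := univ.filter fun j => column S j = univ

lemma sum_card_column (S : Finset (Site L)) : ∑ j, #(column S j) = #S := by
  conv_rhs => rw [← filter_univ_mem S]
  simp only [column, card_filter, ← Fintype.sum_prod_type']

lemma vBonds_eq_sum_bondCount_column (S : Finset (Site L)) :
    vBonds S = ∑ j, bondCount (column S j) := by
  rw [vBonds, ← filter_univ_mem S, filter_filter]
  simp only [bondCount, column, card_filter, Fintype.sum_prod_type, mem_filter, mem_univ,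
    true_and, sum_filter, ite_and, Prod.mk_sub_mk, sub_zero]

lemma bondCount_add_ite_nonempty_le (T : Finset (ZMod L)) :
    bondCount T + (if T.Nonempty then 1 else 0) ≤ #T + (if T = univ then 1 else 0) := by
  by_cases hT : T = univ
  · have := bondCount_le_card T
    split_ifs <;> omega
  · rcases T.eq_empty_or_nonempty with rfl | hne
    · simp [bondCount]
    · have := bondCount_le_card_sub_one hT
      have := card_pos.mpr hne
      simp only [hne, hT, if_true, if_false]
      omega

lemma filter_column_nonempty (S : Finset (Site L)) :
    univ.filter (fun j => (column S j).Nonempty) = S.image Prod.fst := by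
  ext j
  simp [column, Finset.Nonempty]

lemma vBonds_add_card_image_fst_le (S : Finset (Site L)) :
    vBonds S + #(S.image Prod.fst) ≤ #S + #(fullColumns S) := by
  calc vBonds S + #(S.image Prod.fst)
      = ∑ j, (bondCount (column S j) + if (column S j).Nonempty then 1 else 0) := by
        rw [sum_add_distrib, vBonds_eq_sum_bondCount_column, ← card_filter,
          filter_column_nonempty]
    _ ≤ ∑ j, (#(column S j) + if column S j = univ then 1 else 0) :=
        sum_le_sum fun j _ => bondCount_add_ite_nonempty_le _
    _ = #S + #(fullColumns S) := by
        rw [sum_add_distrib, sum_card_column, ← card_filter, fullColumns]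

lemma card_fullColumns_mul_le (S : Finset (Site L)) : #(fullColumns S) * L ≤ #S :=
  calc #(fullColumns S) * L = ∑ j ∈ fullColumns S, #(column S j) := by
        rw [sum_congr rfl fun j hj => by rw [(mem_filter.mp hj).2, card_univ, ZMod.card],
          sum_const, smul_eq_mul]
    _ ≤ ∑ j, #(column S j) := sum_le_sum_of_subset (subset_univ _)
    _ = #S := sum_card_column S

lemma fullColumns_subset_image_fst (S : Finset (Site L)) : fullColumns S ⊆ S.image Prod.fst := by
  intro j hj
  rw [← filter_column_nonempty, mem_filter]
  rw [fullColumns, mem_filter] at hj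
  exact ⟨mem_univ j, hj.2 ▸ univ_nonempty⟩

lemma image_snd_eq_univ_of_mem_fullColumns {S : Finset (Site L)} {j : ZMod L}
    (hj : j ∈ fullColumns S) : S.image Prod.snd = univ := by
  rw [fullColumns, mem_filter] at hj
  exact eq_univ_of_forall fun i => mem_image.mpr ⟨(j, i), mem_column.mp (hj.2 ▸ mem_univ i), rfl⟩

lemma card_image_fst_eq_and_card_image_snd_eq {n : ℕ} {S : Finset (Site L)} (hL : 2 * n < L)
    (hS : #S = n ^ 2) (hE : 2 * n * (n - 1) ≤ hBonds S + vBonds S) :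
    #(S.image Prod.fst) = n ∧ #(S.image Prod.snd) = n := by
  have hfst : (S.image Prod.swap).image Prod.fst = S.image Prod.snd := by
    rw [image_image]; rfl
  have hsnd : (S.image Prod.swap).image Prod.snd = S.image Prod.fst := by
    rw [image_image]; rfl
  have hswap : #(S.image Prod.swap) = #S := card_image_of_injective _ Prod.swap_injective
  have hv := vBonds_add_card_image_fst_le S
  have hh := vBonds_add_card_image_fst_le (S.image Prod.swap)
  rw [← hBonds_eq_vBonds_image_swap, hfst, hswap] at hh
  have hsq : 2 * n * (n - 1) + 2 * n = 2 * n ^ 2 := by cases n <;> simp; ring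
  have hfull : #(fullColumns S) = 0 ∧ #(fullColumns (S.image Prod.swap)) = 0 := by
    refine full_line_counts_eq_zero hL (c := #(S.image Prod.fst)) (r := #(S.image Prod.snd))
      ?_ (hS ▸ card_fullColumns_mul_le S) (hS ▸ hswap ▸ card_fullColumns_mul_le _)
      (card_le_card (fullColumns_subset_image_fst S))
      (hfst ▸ card_le_card (fullColumns_subset_image_fst _)) (fun hf => ?_) (fun hg => ?_)
    · omega
    · obtain ⟨j, hj⟩ := card_ne_zero.mp hf
      rw [image_snd_eq_univ_of_mem_fullColumns hj, card_univ, ZMod.card]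
    · obtain ⟨j, hj⟩ := card_ne_zero.mp hg
      rw [← hsnd, image_snd_eq_univ_of_mem_fullColumns hj, card_univ, ZMod.card]
  refine eq_and_eq_of_add_le_of_sq_le_mul ?_ ?_
  · omega
  · rw [← hS, ← card_product]
    exact card_le_card subset_product

lemma exists_product_eq_squareSet {n : ℕ} {A B : Finset (ZMod L)} (hn : n < L) (hA : #A = n)
    (hB : #B = n) (hE : 2 * n * (n - 1) ≤ hBonds (A ×ˢ B) + vBonds (A ×ˢ B)) :
    ∃ x, A ×ˢ B = squareSet L n x := by
  have hne_univ : ∀ T : Finset (ZMod L), #T = n → T ≠ univ := by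
    rintro T hT rfl
    rw [card_univ, ZMod.card] at hT
    omega
  have hbA : bondCount A ≤ n - 1 := hA ▸ bondCount_le_card_sub_one (hne_univ A hA)
  have hbB : bondCount B ≤ n - 1 := hB ▸ bondCount_le_card_sub_one (hne_univ B hB)
  rw [hBonds_product, vBonds_product, hA, hB] at hE
  have htight : n ≤ bondCount A + 1 ∧ n ≤ bondCount B + 1 := by
    rcases n with _ | m
    · simp
    · simp only [add_tsub_cancel_right] at hbA hbB hE ⊢
      constructor <;> nlinarith
  obtain ⟨a, ha⟩ := exists_eq_image_add_range (hne_univ A hA) (hA ▸ htight.1)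
  obtain ⟨b, hb⟩ := exists_eq_image_add_range (hne_univ B hB) (hB ▸ htight.2)
  exact ⟨(a, b), by rw [squareSet_eq_product, ha, hb, hA, hB]⟩

end MinimalEnergy

open MinimalEnergy in
theorem minimal_energy_unique_general (n L : ℕ) (hL : 2 * n < L)
    (S : Finset (Site L)) (hS : S.card = n ^ 2) (hE : torusE L S = 2 * n * (n - 1)) :
    ∃ x : Site L, S = squareSet L n x := by
  have : NeZero L := ⟨by omega⟩
  have hE' : 2 * n * (n - 1) ≤ hBonds S + vBonds S := hE ▸ torusE_le_hBonds_add_vBonds S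
  obtain ⟨hA, hB⟩ := card_image_fst_eq_and_card_image_snd_eq hL hS hE'
  have hprod : S = S.image Prod.fst ×ˢ S.image Prod.snd :=
    eq_of_subset_of_card_le subset_product (by rw [card_product, hA, hB, hS, sq])
  rw [hprod] at hE' ⊢
  exact exists_product_eq_squareSet (by omega) hA hB hE'

/-- for `n ≥ 4` and `L > 2n`, the only sets of `n²` sites with exactly
`2n(n−1)` internal adjacent pairs (i.e. the only minimal-energy configurations)
are the translated squares `Q_x = x + {0,…,n−1}²`. -/
theorem minimal_energy_unique (n L : ℕ) (hn : 4 ≤ n) (hL : 2 * n < L)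
    (S : Finset (Site L)) (hS : S.card = n ^ 2) (hE : torusE L S = 2 * n * (n - 1)) :
    ∃ x : Site L, S = squareSet L n x :=
  minimal_energy_unique_general n L hL S hS hE
end
end

section
/- Let n ≥ 1. Every finite subset S ⊆ ℤ² with |S| = n² satisfies e(S) ≤ 2n(n−1), i.e. the number of nearest-neighbor pairs contained in a set of n² points of the planar lattice is at most 2n(n−1). -/
open scoped Classical

noncomputable section

/-- Two points of `ℤ²` are adjacent (nearest neighbors, Euclidean distance 1)
if their difference is a unit vector. -/
def planeAdj (u v : ℤ × ℤ) : Prop :=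
  u - v = (1, 0) ∨ u - v = (-1, 0) ∨ u - v = (0, 1) ∨ u - v = (0, -1)

/-- `e(S)`: the number of unordered pairs of adjacent points contained in `S`
(the internal edges of `S`). -/
def planeE (S : Finset (ℤ × ℤ)) : ℕ :=
  ((S ×ˢ S).filter fun p => planeAdj p.1 p.2).card / 2

/-- The number of `v ∈ S` with `v + e ∈ S`, plus the number of fibers of `σ`,
is at most `|S|`, provided adding `e` increases `π` and preserves `σ`. -/
lemma shift_bound (S : Finset (ℤ × ℤ)) (e : ℤ × ℤ) (π σ : ℤ × ℤ → ℤ)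
    (hπ : ∀ v, π (v + e) = π v + 1) (hσ : ∀ v, σ (v + e) = σ v) :
    (S.filter fun v => v + e ∈ S).card + (S.image σ).card ≤ S.card := by
  classical
  have hS : S.card = ∑ y ∈ S.image σ, (S.filter fun v => σ v = y).card :=
    Finset.card_eq_sum_card_fiberwise fun x hx => Finset.mem_image_of_mem σ hx
  have hT : (S.filter fun v => v + e ∈ S).card
      = ∑ y ∈ S.image σ, ((S.filter fun v => v + e ∈ S).filter fun v => σ v = y).card :=
    Finset.card_eq_sum_card_fiberwise fun x hx =>
      Finset.mem_image_of_mem σ (Finset.mem_filter.mp hx).1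
  have hcard : (S.image σ).card = ∑ y ∈ S.image σ, 1 := by simp
  rw [hS, hT, hcard, ← Finset.sum_add_distrib]
  apply Finset.sum_le_sum
  intro y hy
  -- the fiber of S over y is nonempty; take its max under π
  obtain ⟨x, hxS, hxy⟩ := Finset.mem_image.mp hy
  have hne : (S.filter fun v => σ v = y).Nonempty :=
    ⟨x, Finset.mem_filter.mpr ⟨hxS, hxy⟩⟩
  obtain ⟨v₀, hv₀, hmax⟩ := Finset.exists_max_image (S.filter fun v => σ v = y) π hne
  have hsub : ((S.filter fun v => v + e ∈ S).filter fun v => σ v = y)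
      ⊆ (S.filter fun v => σ v = y).erase v₀ := by
    intro v hv
    simp only [Finset.mem_filter] at hv
    obtain ⟨⟨hvS, hveS⟩, hvy⟩ := hv
    refine Finset.mem_erase.mpr ⟨?_, Finset.mem_filter.mpr ⟨hvS, hvy⟩⟩
    rintro rfl
    have hmem : v + e ∈ S.filter fun v => σ v = y :=
      Finset.mem_filter.mpr ⟨hveS, by rw [hσ]; exact hvy⟩
    have := hmax _ hmem
    rw [hπ] at this
    omega
  have h1 := Finset.card_le_card hsub
  have h2 : ((S.filter fun v => σ v = y).erase v₀).card
      = (S.filter fun v => σ v = y).card - 1 := Finset.card_erase_of_mem hv₀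
  have h3 : 1 ≤ (S.filter fun v => σ v = y).card := Finset.card_pos.mpr hne
  omega

/-- Ordered adjacent pairs in direction `e` biject with points `v ∈ S` with `v + e ∈ S`. -/
lemma dir_card (S : Finset (ℤ × ℤ)) (e : ℤ × ℤ) :
    ((S ×ˢ S).filter fun p => p.1 - p.2 = e).card = (S.filter fun v => v + e ∈ S).card := by
  classical
  apply Finset.card_bij (fun p _ => p.2)
  · intro p hp
    simp only [Finset.mem_filter, Finset.mem_product] at hp
    obtain ⟨⟨h1, h2⟩, h3⟩ := hp
    have : p.1 = p.2 + e := by rw [← h3]; ring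
    exact Finset.mem_filter.mpr ⟨h2, by rw [← this]; exact h1⟩
  · intro p₁ hp₁ p₂ hp₂ h
    simp only [Finset.mem_filter, Finset.mem_product] at hp₁ hp₂
    have e1 : p₁.1 = p₁.2 + e := by rw [← hp₁.2]; ring
    have e2 : p₂.1 = p₂.2 + e := by rw [← hp₂.2]; ring
    exact Prod.ext (by rw [e1, e2, h]) h
  · intro v hv
    simp only [Finset.mem_filter] at hv
    refine ⟨(v + e, v), ?_, rfl⟩
    simp only [Finset.mem_filter, Finset.mem_product]
    exact ⟨⟨hv.2, hv.1⟩, by ring⟩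

/-- Reversing the direction of the edge preserves the count. -/
lemma dir_card_neg (S : Finset (ℤ × ℤ)) (e : ℤ × ℤ) :
    ((S ×ˢ S).filter fun p => p.1 - p.2 = -e).card
      = ((S ×ˢ S).filter fun p => p.1 - p.2 = e).card := by
  classical
  apply Finset.card_bij (fun p _ => (p.2, p.1))
  · intro p hp
    simp only [Finset.mem_filter, Finset.mem_product] at hp ⊢
    refine ⟨⟨hp.1.2, hp.1.1⟩, ?_⟩
    have := hp.2
    have : p.2 - p.1 = e := by rw [show p.2 - p.1 = -(p.1 - p.2) by ring, this]; ring
    exact this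
  · intro p₁ hp₁ p₂ hp₂ h
    have h1 : p₁.2 = p₂.2 := congrArg Prod.fst h
    have h2 : p₁.1 = p₂.1 := congrArg Prod.snd h
    exact Prod.ext h2 h1
  · intro p hp
    simp only [Finset.mem_filter, Finset.mem_product] at hp
    refine ⟨(p.2, p.1), ?_, rfl⟩
    simp only [Finset.mem_filter, Finset.mem_product]
    exact ⟨⟨hp.1.2, hp.1.1⟩, by rw [show p.2 - p.1 = -(p.1 - p.2) by ring, hp.2]⟩

/-- every set of `n²` points of the planar lattice `ℤ²` contains at most
`2n(n−1)` nearest-neighbor pairs. -/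
theorem plane_edge_bound (n : ℕ) (hn : 1 ≤ n) (S : Finset (ℤ × ℤ)) (hS : S.card = n ^ 2) :
    planeE S ≤ 2 * n * (n - 1) := by
  classical
  set H := S.filter fun v => v + ((1 : ℤ), (0 : ℤ)) ∈ S with hH
  set V := S.filter fun v => v + ((0 : ℤ), (1 : ℤ)) ∈ S with hV
  set R := S.image Prod.snd with hR
  set C := S.image Prod.fst with hC
  -- split the adjacent-pair set into four directions
  have hsplit : ((S ×ˢ S).filter fun p => planeAdj p.1 p.2)
      = ((S ×ˢ S).filter fun p => p.1 - p.2 = (1, 0))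
        ∪ ((S ×ˢ S).filter fun p => p.1 - p.2 = (-1, 0))
        ∪ ((S ×ˢ S).filter fun p => p.1 - p.2 = (0, 1))
        ∪ ((S ×ˢ S).filter fun p => p.1 - p.2 = (0, -1)) := by
    rw [← Finset.filter_or, ← Finset.filter_or, ← Finset.filter_or]
    apply Finset.filter_congr
    intro p _
    simp [planeAdj, or_assoc]
  have hdisj : ∀ (a b : ℤ × ℤ), a ≠ b →
      Disjoint ((S ×ˢ S).filter fun p => p.1 - p.2 = a)
        ((S ×ˢ S).filter fun p => p.1 - p.2 = b) := by
    intro a b hab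
    rw [Finset.disjoint_left]
    intro p hp1 hp2
    simp only [Finset.mem_filter] at hp1 hp2
    exact hab (hp1.2 ▸ hp2.2)
  have hcardE : ((S ×ˢ S).filter fun p => planeAdj p.1 p.2).card
      = 2 * H.card + 2 * V.card := by
    rw [hsplit]
    rw [Finset.card_union_of_disjoint, Finset.card_union_of_disjoint,
        Finset.card_union_of_disjoint]
    · have e1 := dir_card S (1, 0)
      have e2 : ((S ×ˢ S).filter fun p => p.1 - p.2 = ((-1 : ℤ), (0 : ℤ))).card
          = ((S ×ˢ S).filter fun p => p.1 - p.2 = ((1 : ℤ), (0 : ℤ))).card := by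
        have := dir_card_neg S ((1 : ℤ), (0 : ℤ))
        simpa using this
      have e3 := dir_card S (0, 1)
      have e4 : ((S ×ˢ S).filter fun p => p.1 - p.2 = ((0 : ℤ), (-1 : ℤ))).card
          = ((S ×ˢ S).filter fun p => p.1 - p.2 = ((0 : ℤ), (1 : ℤ))).card := by
        have := dir_card_neg S ((0 : ℤ), (1 : ℤ))
        simpa using this
      rw [e2, e4, e1, e3]
      ring
    · exact hdisj _ _ (by decide)
    · apply Finset.disjoint_union_left.mpr
      exact ⟨hdisj _ _ (by decide), hdisj _ _ (by decide)⟩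
    · apply Finset.disjoint_union_left.mpr
      refine ⟨Finset.disjoint_union_left.mpr ⟨hdisj _ _ (by decide), hdisj _ _ (by decide)⟩,
        hdisj _ _ (by decide)⟩
  have hplaneE : planeE S = H.card + V.card := by
    rw [planeE, hcardE]; omega
  -- horizontal bound
  have hHb : H.card + R.card ≤ S.card :=
    shift_bound S (1, 0) Prod.fst Prod.snd (fun v => rfl) (fun v => by simp)
  -- vertical bound
  have hVb : V.card + C.card ≤ S.card :=
    shift_bound S (0, 1) Prod.snd Prod.fst (fun v => rfl) (fun v => by simp)
  -- grid bound
  have hgrid : S.card ≤ C.card * R.card := by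
    have hsub : S ⊆ C ×ˢ R := by
      intro v hv
      exact Finset.mem_product.mpr ⟨Finset.mem_image_of_mem _ hv, Finset.mem_image_of_mem _ hv⟩
    calc S.card ≤ (C ×ˢ R).card := Finset.card_le_card hsub
      _ = C.card * R.card := Finset.card_product C R
  -- AM-GM
  have hamgm : 2 * n ≤ C.card + R.card := by
    have h1 : (n : ℤ) ^ 2 ≤ (C.card : ℤ) * R.card := by
      rw [hS] at hgrid; exact_mod_cast hgrid
    have h2 : (2 * n : ℤ) ≤ (C.card : ℤ) + R.card := by
      nlinarith [sq_nonneg ((C.card : ℤ) - R.card), h1]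
    exact_mod_cast h2
  rw [hplaneE]
  rw [hS] at hHb hVb
  obtain ⟨k, rfl⟩ : ∃ k, n = k + 1 := ⟨n - 1, by omega⟩
  have hpow : (k + 1) ^ 2 = k * k + 2 * k + 1 := by ring
  have hgoal : 2 * (k + 1) * (k + 1 - 1) = 2 * (k * k) + 2 * k := by
    simp; ring
  rw [hgoal]
  omega
end
end

section
/- Let n ≥ 1 and let S ⊆ ℤ² be finite with |S| = n² and e(S) = 2n(n−1). Then S is a translate of the square {0,…,n−1} × {0,…,n−1}, i.e. S = x + {0,…,n−1}² for some x ∈ ℤ². -/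
/-
Let `R` and `C` be the projections of `S` onto the two axes. A nonempty row of `S` with `k`
points carries at most `k - 1` horizontal edges, so there are at most `|S| - |C|` horizontal and
`|S| - |R|` vertical edges. With `|S| = n²` and `e(S) = 2n(n - 1)` this gives `|R| + |C| ≤ 2n`,
while `n² = |S| ≤ |R| |C|`; by AM-GM, `|R| = |C| = n` and `S = R × C`. For a product, the
number of horizontal edges is `|C|` times the number of consecutive pairs in `R`, which is at
most `|R| - 1` with equality only when `R` is an interval; the same holds for `C`.
-/

open scoped Classical

noncomputable section

/-- The square `{0,…,n−1} × {0,…,n−1} ⊆ ℤ²`. -/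
def planeSquare (n : ℕ) : Finset (ℤ × ℤ) :=
  (Finset.range n ×ˢ Finset.range n).image fun p => ((p.1 : ℤ), (p.2 : ℤ))

open Finset

namespace Finset

lemma card_filter_add_one_mem_lt {T : Finset ℤ} (hT : T.Nonempty) :
    #{a ∈ T | a + 1 ∈ T} < #T :=
  card_lt_card <| filter_ssubset.2 ⟨T.max' hT, T.max'_mem hT, fun h => by
    linarith [T.le_max' _ h]⟩

lemma exists_eq_Ico_of_card_filter_add_one_mem {T : Finset ℤ}
    (h : #{a ∈ T | a + 1 ∈ T} + 1 = #T) : ∃ a : ℤ, T = Ico a (a + #T) := by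
  have hT : T.Nonempty := card_pos.1 (by omega)
  set m := T.min' hT
  set M := T.max' hT
  have hsucc : {a ∈ T | a + 1 ∈ T} = T.erase M := by
    refine eq_of_subset_of_card_le (fun a ha => ?_) ?_
    · rw [mem_filter] at ha
      exact mem_erase.2 ⟨fun h => by linarith [T.le_max' _ ha.2], ha.1⟩
    · rw [card_erase_of_mem (T.max'_mem hT)]; omega
  have hstep : ∀ a ∈ T, a < M → a + 1 ∈ T := fun a ha haM =>
    (mem_filter.1 (hsucc ▸ mem_erase.2 ⟨haM.ne, ha⟩ : a ∈ {a ∈ T | a + 1 ∈ T})).2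
  have hIcc : T = Icc m M := by
    refine (subset_antisymm (fun a ha => mem_Icc.2 ⟨T.min'_le a ha, T.le_max' a ha⟩) ?_)
    intro a ha
    rw [mem_Icc] at ha
    induction a, ha.1 using Int.leInduction with
    | base => exact T.min'_mem hT
    | succ a hma ih => exact hstep a (ih ⟨hma, by omega⟩) (by omega)
  have hcard : (#T : ℤ) = M + 1 - m := by
    rw [hIcc, Int.card_Icc, Int.toNat_of_nonneg (by linarith [T.min'_le M (T.max'_mem hT)])]
  refine ⟨m, hIcc.trans (ext fun a => ?_)⟩
  simp only [mem_Icc, mem_Ico]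
  omega

section

variable {G : Type*} [AddCommGroup G] [DecidableEq G]

lemma card_filter_sub_eq (S : Finset G) (d : G) :
    #{p ∈ S ×ˢ S | p.1 - p.2 = d} = #{u ∈ S | u + d ∈ S} := by
  refine card_nbij' Prod.snd (fun u => (u + d, u)) ?_ ?_ ?_ ?_
  all_goals intro p; simp only [coe_filter, Set.mem_ofPred_eq, mem_product]
  · rintro ⟨⟨h1, h2⟩, rfl⟩; exact ⟨h2, by rwa [add_sub_cancel]⟩
  · rintro ⟨h1, h2⟩; simp [h1, h2]
  · rintro ⟨-, rfl⟩; simp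
  · simp

lemma card_filter_sub_eq_neg (S : Finset G) (d : G) :
    #{p ∈ S ×ˢ S | p.1 - p.2 = -d} = #{p ∈ S ×ˢ S | p.1 - p.2 = d} := by
  refine card_nbij' Prod.swap Prod.swap ?_ ?_ (fun _ _ => rfl) (fun _ _ => rfl)
  all_goals
    intro p
    simp only [coe_filter, Set.mem_ofPred_eq, mem_product, Prod.fst_swap, Prod.snd_swap]
  · rintro ⟨⟨h1, h2⟩, h⟩; exact ⟨⟨h2, h1⟩, by rw [← neg_sub, h, neg_neg]⟩
  · rintro ⟨⟨h1, h2⟩, h⟩; exact ⟨⟨h2, h1⟩, by rw [← h, neg_sub]⟩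

end

lemma card_filter_add_mem_product {G H : Type*} [Add G] [Add H] [DecidableEq G]
    [DecidableEq H] (R : Finset G) (C : Finset H) (d : G) (e : H) :
    #{u ∈ R ×ˢ C | u + (d, e) ∈ R ×ˢ C} =
      #{a ∈ R | a + d ∈ R} * #{c ∈ C | c + e ∈ C} := by
  rw [← card_product, ← filter_product]
  simp only [mem_product, Prod.fst_add, Prod.snd_add]

end Finset

lemma Nat.eq_and_eq_of_add_le_of_sq_le_mul {r c n : ℕ} (hsum : r + c ≤ 2 * n)
    (hprod : n ^ 2 ≤ r * c) : r = n ∧ c = n := by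
  have hrc : r = c := by
    zify at hsum hprod
    have hsq : ((r : ℤ) - c) ^ 2 = 0 := le_antisymm (by nlinarith) (sq_nonneg _)
    have := pow_eq_zero_iff two_ne_zero |>.1 hsq
    omega
  subst hrc
  constructor <;> nlinarith

lemma planeE_eq (S : Finset (ℤ × ℤ)) :
    planeE S = #{u ∈ S | u + (1, 0) ∈ S} + #{u ∈ S | u + (0, 1) ∈ S} := by
  let D : Finset (ℤ × ℤ) := {(1, 0), (-1, 0), (0, 1), (0, -1)}
  have hadj : ∀ p : (ℤ × ℤ) × (ℤ × ℤ), planeAdj p.1 p.2 ↔ p.1 - p.2 ∈ D := by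
    intro p; simp [planeAdj, D]
  have hfib := card_eq_sum_card_fiberwise (f := fun p : (ℤ × ℤ) × (ℤ × ℤ) => p.1 - p.2)
    (s := {p ∈ S ×ˢ S | planeAdj p.1 p.2}) (t := D) (fun p hp => (hadj p).1 (mem_filter.1 hp).2)
  have hfibre : ∀ d ∈ D, #{p ∈ {p ∈ S ×ˢ S | planeAdj p.1 p.2} | p.1 - p.2 = d}
      = #{p ∈ S ×ˢ S | p.1 - p.2 = d} := by
    intro d hd
    rw [filter_filter]
    congr 1; refine filter_congr fun p _ => ?_
    rw [hadj]; exact ⟨And.right, fun h => ⟨h ▸ hd, h⟩⟩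
  rw [sum_congr rfl hfibre] at hfib
  simp only [D] at hfib
  rw [sum_insert (by decide), sum_insert (by decide), sum_insert (by decide), sum_singleton] at hfib
  have h1 := card_filter_sub_eq_neg S (1, 0)
  have h2 := card_filter_sub_eq_neg S (0, 1)
  simp only [Prod.neg_mk, neg_zero] at h1 h2
  rw [planeE, hfib, h1, h2, card_filter_sub_eq, card_filter_sub_eq]
  omega

lemma planeE_product (R C : Finset ℤ) :
    planeE (R ×ˢ C) = #{a ∈ R | a + 1 ∈ R} * #C + #R * #{c ∈ C | c + 1 ∈ C} := by
  rw [planeE_eq, card_filter_add_mem_product, card_filter_add_mem_product]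
  simp

def planeRow (S : Finset (ℤ × ℤ)) (c : ℤ) : Finset ℤ :=
  {a ∈ S.image Prod.fst | (a, c) ∈ S}

@[simp] lemma mem_planeRow {S : Finset (ℤ × ℤ)} {c a : ℤ} :
    a ∈ planeRow S c ↔ (a, c) ∈ S := by
  simp only [planeRow, mem_filter, mem_image, and_iff_right_iff_imp]
  exact fun h => ⟨_, h, rfl⟩

lemma card_eq_sum_card_planeRow (S : Finset (ℤ × ℤ)) :
    #S = ∑ c ∈ S.image Prod.snd, #(planeRow S c) := by
  rw [card_eq_sum_card_fiberwise fun p hp => mem_image_of_mem Prod.snd hp]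
  refine sum_congr rfl fun c _ => card_bij' (fun p _ => p.1) (fun a _ => (a, c)) ?_ ?_ ?_ ?_
  · rintro ⟨a, b⟩ h; grind [mem_planeRow]
  · intro a h; grind [mem_planeRow]
  · rintro ⟨a, b⟩ h; grind [mem_planeRow]
  · intro a h; grind [mem_planeRow]

lemma card_add_one_mem_eq_sum_planeRow (S : Finset (ℤ × ℤ)) :
    #{u ∈ S | u + (1, 0) ∈ S} =
      ∑ c ∈ S.image Prod.snd, #{a ∈ planeRow S c | a + 1 ∈ planeRow S c} := by
  rw [card_eq_sum_card_fiberwise fun p hp => mem_image_of_mem Prod.snd (mem_filter.1 hp).1]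
  refine sum_congr rfl fun c _ => card_bij' (fun p _ => p.1) (fun a _ => (a, c)) ?_ ?_ ?_ ?_
  · rintro ⟨a, b⟩ h; grind [mem_planeRow, Prod.mk_add_mk]
  · intro a h; grind [mem_planeRow, Prod.mk_add_mk]
  · rintro ⟨a, b⟩ h; grind [mem_planeRow]
  · intro a h; grind [mem_planeRow]

lemma card_add_one_mem_add_card_image_snd_le (S : Finset (ℤ × ℤ)) :
    #{u ∈ S | u + (1, 0) ∈ S} + #(S.image Prod.snd) ≤ #S := by
  rw [card_add_one_mem_eq_sum_planeRow, card_eq_sum_card_planeRow, card_eq_sum_ones (S.image _),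
    ← sum_add_distrib]
  refine sum_le_sum fun c hc => card_filter_add_one_mem_lt ?_
  obtain ⟨p, hp, rfl⟩ := mem_image.1 hc
  exact ⟨p.1, mem_planeRow.2 hp⟩

lemma card_add_one_mem_image_swap (S : Finset (ℤ × ℤ)) :
    #{u ∈ S.image Prod.swap | u + (1, 0) ∈ S.image Prod.swap} = #{u ∈ S | u + (0, 1) ∈ S} :=
  card_equiv (Equiv.prodComm ℤ ℤ) fun ⟨a, b⟩ => by simp [Prod.mk_add_mk]

lemma card_add_zero_one_mem_add_card_image_fst_le (S : Finset (ℤ × ℤ)) :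
    #{u ∈ S | u + (0, 1) ∈ S} + #(S.image Prod.fst) ≤ #S := by
  have h := card_add_one_mem_add_card_image_snd_le (S.image Prod.swap)
  rwa [card_add_one_mem_image_swap, image_image,
    card_image_of_injective _ Prod.swap_injective] at h

lemma image_add_planeSquare (n : ℕ) (a b : ℤ) :
    (planeSquare n).image ((a, b) + ·) = Ico a (a + n) ×ˢ Ico b (b + n) := by
  ext ⟨x, y⟩
  simp only [planeSquare, image_image, mem_image, mem_product, mem_range, mem_Ico, Prod.exists,
    Function.comp_apply, Prod.mk_add_mk, Prod.mk.injEq]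
  constructor
  · rintro ⟨i, j, ⟨hi, hj⟩, rfl, rfl⟩; omega
  · rintro ⟨⟨hx, hx'⟩, hy, hy'⟩
    exact ⟨(x - a).toNat, (y - b).toNat, by omega⟩

/-- a set of `n²` points of `ℤ²` with exactly `2n(n−1)` internal edges
is a translate `x + {0,…,n−1}²` of the square. -/
theorem plane_square_unique (n : ℕ) (hn : 1 ≤ n) (S : Finset (ℤ × ℤ))
    (hS : S.card = n ^ 2) (hE : planeE S = 2 * n * (n - 1)) :
    ∃ x : ℤ × ℤ, S = (planeSquare n).image (x + ·) := by
  set R := S.image Prod.fst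
  set C := S.image Prod.snd
  have hrows := card_add_one_mem_add_card_image_snd_le S
  have hcols := card_add_zero_one_mem_add_card_image_fst_le S
  have hsq : n * (n - 1) + n = n ^ 2 := by cases n <;> simp; ring
  obtain ⟨hR, hC⟩ : #R = n ∧ #C = n := by
    refine Nat.eq_and_eq_of_add_le_of_sq_le_mul ?_
      (hS ▸ card_product R C ▸ card_le_card subset_product)
    rw [planeE_eq] at hE
    linarith
  have hSRC : S = R ×ˢ C :=
    eq_of_subset_of_card_le subset_product (by rw [card_product, hR, hC, hS, sq])
  rw [hSRC, planeE_product, hR, hC] at hE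
  have hRlt := card_filter_add_one_mem_lt (T := R) (card_pos.1 (by omega))
  have hClt := card_filter_add_one_mem_lt (T := C) (card_pos.1 (by omega))
  obtain ⟨hRsucc, hCsucc⟩ :
      #{a ∈ R | a + 1 ∈ R} + 1 = #R ∧ #{c ∈ C | c + 1 ∈ C} + 1 = #C := by
    rw [hR] at hRlt ⊢
    rw [hC] at hClt ⊢
    constructor <;> nlinarith
  obtain ⟨a, ha⟩ := exists_eq_Ico_of_card_filter_add_one_mem hRsucc
  obtain ⟨b, hb⟩ := exists_eq_Ico_of_card_filter_add_one_mem hCsucc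
  refine ⟨(a, b), ?_⟩
  rw [image_add_planeSquare, hSRC, ha, hb, hR, hC]
end
end

section
/- Let A and B be finite nonempty subsets of ℤ². Then there exists a vector v ∈ ℤ² such that (v + A) ∩ B = ∅ and e((v + A) ∪ B) ≥ e(A) + e(B) + 1; that is, one can translate A rigidly so that it is disjoint from B but touches it, strictly increasing the total number of internal edges beyond the sum of those of A and B. -/
open scoped Classical

noncomputable section

lemma planeAdj_add (w u v : ℤ × ℤ) : planeAdj (w + u) (w + v) ↔ planeAdj u v := by
  simp [planeAdj, add_sub_add_left_eq_sub]

lemma planeE_image (v : ℤ × ℤ) (A : Finset (ℤ × ℤ)) :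
    planeE (A.image (v + ·)) = planeE A := by
  unfold planeE
  congr 1
  rw [show ((A.image (v + ·)) ×ˢ (A.image (v + ·))).filter (fun p => planeAdj p.1 p.2)
      = (((A ×ˢ A).filter fun p => planeAdj p.1 p.2).image
          (Prod.map (v + ·) (v + ·))) from ?_]
  · rw [Finset.card_image_of_injective]
    exact Function.Injective.prodMap (add_right_injective v) (add_right_injective v)
  · ext p
    simp only [Finset.mem_filter, Finset.mem_product, Finset.mem_image, Prod.map,
      Finset.mem_image]
    obtain ⟨p1, p2⟩ := p
    constructor
    · rintro ⟨⟨⟨a1, ha1, rfl⟩, ⟨a2, ha2, rfl⟩⟩, hadj⟩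
      exact ⟨(a1, a2), ⟨⟨ha1, ha2⟩, (planeAdj_add v a1 a2).mp hadj⟩, rfl⟩
    · rintro ⟨⟨a1, a2⟩, ⟨⟨ha1, ha2⟩, hadj⟩, heq⟩
      injection heq with h1 h2
      subst h1; subst h2
      exact ⟨⟨⟨a1, ha1, rfl⟩, ⟨a2, ha2, rfl⟩⟩, (planeAdj_add v a1 a2).mpr hadj⟩

/-- two finite nonempty subsets of `ℤ²` can be rigidly translated so as
to be disjoint while strictly increasing the total number of internal edges beyond the
sum of their individual internal edges. -/
theorem translate_and_glue (A B : Finset (ℤ × ℤ)) (hA : A.Nonempty) (hB : B.Nonempty) :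
    ∃ v : ℤ × ℤ, Disjoint (A.image (v + ·)) B ∧
      planeE A + planeE B + 1 ≤ planeE (A.image (v + ·) ∪ B) := by
  obtain ⟨a, ha, hamax⟩ := A.exists_max_image Prod.fst hA
  obtain ⟨b, hb, hbmin⟩ := B.exists_min_image Prod.fst hB
  set v : ℤ × ℤ := (b.1 - a.1 - 1, b.2 - a.2) with hv
  set C : Finset (ℤ × ℤ) := A.image (v + ·) with hC
  have hdisj : Disjoint C B := by
    rw [Finset.disjoint_left]
    rintro x hx hxB
    simp only [hC, Finset.mem_image] at hx
    obtain ⟨a', ha', rfl⟩ := hx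
    have h1 := hamax a' ha'
    have h2 := hbmin _ hxB
    simp only [hv, Prod.fst_add] at h2
    omega
  refine ⟨v, hdisj, ?_⟩
  -- the touching point
  set p : ℤ × ℤ := v + a with hp
  have hpC : p ∈ C := Finset.mem_image_of_mem _ ha
  have hadj_pb : planeAdj p b := by
    right; left
    simp only [hp, hv, Prod.ext_iff, Prod.fst_sub, Prod.snd_sub, Prod.fst_add, Prod.snd_add]
    constructor <;> [skip; skip] <;> omega
  have hadj_bp : planeAdj b p := by
    left
    simp only [hp, hv, Prod.ext_iff, Prod.fst_sub, Prod.snd_sub, Prod.fst_add, Prod.snd_add]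
    constructor <;> [skip; skip] <;> omega
  have hpb : p ≠ b := fun h => Finset.disjoint_left.mp hdisj hpC (h ▸ hb)
  set FC := (C ×ˢ C).filter fun q => planeAdj q.1 q.2 with hFC
  set FB := (B ×ˢ B).filter fun q => planeAdj q.1 q.2 with hFB
  set F := ((C ∪ B) ×ˢ (C ∪ B)).filter fun q => planeAdj q.1 q.2 with hF
  have hsub : FC ∪ FB ∪ {(p, b), (b, p)} ⊆ F := by
    intro q hq
    simp only [Finset.mem_union, Finset.mem_insert, Finset.mem_singleton, hFC, hFB,
      Finset.mem_filter, Finset.mem_product] at hq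
    simp only [hF, Finset.mem_filter, Finset.mem_product, Finset.mem_union]
    rcases hq with (⟨⟨h1, h2⟩, h3⟩ | ⟨⟨h1, h2⟩, h3⟩) | rfl | rfl
    · exact ⟨⟨Or.inl h1, Or.inl h2⟩, h3⟩
    · exact ⟨⟨Or.inr h1, Or.inr h2⟩, h3⟩
    · exact ⟨⟨Or.inl hpC, Or.inr hb⟩, hadj_pb⟩
    · exact ⟨⟨Or.inr hb, Or.inl hpC⟩, hadj_bp⟩
  have hd1 : Disjoint FC FB := by
    rw [Finset.disjoint_left]
    rintro q hq1 hq2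
    simp only [hFC, hFB, Finset.mem_filter, Finset.mem_product] at hq1 hq2
    exact Finset.disjoint_left.mp hdisj hq1.1.1 hq2.1.1
  have hd2 : Disjoint (FC ∪ FB) ({(p, b), (b, p)} : Finset ((ℤ × ℤ) × (ℤ × ℤ))) := by
    rw [Finset.disjoint_left]
    rintro q hq1 hq2
    simp only [Finset.mem_insert, Finset.mem_singleton] at hq2
    simp only [Finset.mem_union, hFC, hFB, Finset.mem_filter, Finset.mem_product] at hq1
    rcases hq2 with rfl | rfl
    · rcases hq1 with ⟨⟨_, h2⟩, _⟩ | ⟨⟨h1, _⟩, _⟩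
      · exact Finset.disjoint_left.mp hdisj h2 hb
      · exact Finset.disjoint_left.mp hdisj hpC h1
    · rcases hq1 with ⟨⟨h1, _⟩, _⟩ | ⟨⟨_, h2⟩, _⟩
      · exact Finset.disjoint_left.mp hdisj h1 hb
      · exact Finset.disjoint_left.mp hdisj hpC h2
  have hcard2 : ({(p, b), (b, p)} : Finset ((ℤ × ℤ) × (ℤ × ℤ))).card = 2 :=
    Finset.card_pair (fun h => hpb (congrArg Prod.fst h))
  have hkey : FC.card + FB.card + 2 ≤ F.card := by
    have := Finset.card_le_card hsub
    rwa [Finset.card_union_of_disjoint hd2, Finset.card_union_of_disjoint hd1, hcard2] at this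
  have hEC : planeE C = planeE A := planeE_image v A
  have hgoal : planeE (C ∪ B) = F.card / 2 := by
    unfold planeE; rw [← hF]
  have hEC' : planeE C = FC.card / 2 := by
    unfold planeE; rw [← hFC]
  have hEB : planeE B = FB.card / 2 := by
    unfold planeE; rw [← hFB]
  rw [← hEC, hgoal, hEC', hEB]
  omega
end
end

section
/- Let n ≥ 4 and L > 2n be integers and fix x ∈ Λ_L. For every pair of adjacent sites u, v ∈ Λ_L with η^x(u) ≠ η^x(v) (so that the exchange produces a new configuration), one has H(σ^{u,v}η^x) ≥ H(η^x) + 2 = −2n(n−1) + 2: every nontrivial single particle move from a square configuration raises the energy by at least 2. -/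
open scoped Classical

noncomputable section

/-- A lattice-gas configuration on `Λ_L`. -/
abbrev Config (L : ℕ) := Site L → Bool

/-- The set of sites occupied by the configuration `η`. -/
def occupied (L : ℕ) [NeZero L] (η : Config L) : Finset (Site L) :=
  Finset.univ.filter fun x => η x = true

/-- The Hamiltonian `H(η) = −Σ η(x)η(y)` (sum over unordered pairs of adjacent sites),
i.e. minus the number of adjacent occupied pairs, as an integer. -/
def confH (L : ℕ) [NeZero L] (η : Config L) : ℤ :=
  -(torusE L (occupied L η) : ℤ)

/-- `σ^{u,v}η`: the configuration obtained from `η` by exchanging the occupation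
variables at `u` and `v`. -/
def swapConf (L : ℕ) (η : Config L) (u v : Site L) : Config L :=
  fun z => if z = u then η v else if z = v then η u else η z

/-- The square configuration `η^x`, whose occupied set is `Q_x`. -/
def squareConf (L n : ℕ) (x : Site L) : Config L :=
  fun z => decide (z ∈ squareSet L n x)

/-! Moving a particle from an occupied site `u` to an empty site `v` changes the number of
ordered adjacent occupied pairs by `2 (deg v - 1) - 2 deg u`, where degrees count occupied
neighbours before the move. The torus is the box product of two cycles and the square is the
product of two arcs `{c, …, c + n - 1}`. So every site of the square has at least two
neighbours in it, and since `n + 2 ≤ L`, an empty site next to the square has exactly one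
neighbour in it. The pair count therefore drops by at least `4`. The box-product formula gives
`4n(n - 1)` ordered pairs in the square itself.
-/

open Finset

section AdjPairs

variable {α : Type*} {r : α → α → Prop}

def adjPairs (r : α → α → Prop) (S : Finset α) : Finset (α × α) :=
  (S ×ˢ S).filter fun p => r p.1 p.2

lemma card_adjPairs_eq_sum (S : Finset α) :
    #(adjPairs r S) = ∑ a ∈ S, #(S.filter (r a)) := by
  simp only [adjPairs, card_filter, sum_product]

lemma card_adjPairs_insert [DecidableEq α] (hsymm : ∀ a b, r a b → r b a)
    (hirr : ∀ a, ¬ r a a) {S : Finset α} {a : α} (ha : a ∉ S) :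
    #(adjPairs r (insert a S)) = #(adjPairs r S) + 2 * #(S.filter (r a)) := by
  have hdeg : ∀ b ∈ S,
      #((insert a S).filter (r b)) = #(S.filter (r b)) + if r b a then 1 else 0 := by
    intro b _
    rw [filter_insert]
    split_ifs
    · exact card_insert_of_notMem fun h => ha (mem_filter.mp h).1
    · rfl
  have hsymm' : S.filter (fun b => r b a) = S.filter (r a) :=
    filter_congr fun b _ => ⟨hsymm b a, hsymm a b⟩
  rw [card_adjPairs_eq_sum, sum_insert ha, sum_congr rfl hdeg, sum_add_distrib, ← card_filter,
    hsymm', filter_insert, if_neg (hirr a), card_adjPairs_eq_sum]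
  ring

lemma card_adjPairs_insert_erase_add_four_le [DecidableEq α] (hsymm : ∀ a b, r a b → r b a)
    (hirr : ∀ a, ¬ r a a) {S : Finset α} {u v : α} (hu : u ∈ S) (hv : v ∉ S)
    (hdeg : 2 ≤ #(S.filter (r u))) (hnbr : ∀ w ∈ S, r v w → w = u) :
    #(adjPairs r (insert v (S.erase u))) + 4 ≤ #(adjPairs r S) := by
  have hremove :
      #(adjPairs r S) = #(adjPairs r (S.erase u)) + 2 * #((S.erase u).filter (r u)) := by
    conv_lhs => rw [← insert_erase hu]
    exact card_adjPairs_insert hsymm hirr (notMem_erase u S)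
  have hadd := card_adjPairs_insert hsymm hirr (S := S.erase u) fun h => hv (mem_of_mem_erase h)
  have hu_nbrs : (S.erase u).filter (r u) = S.filter (r u) := by
    rw [filter_erase, erase_eq_of_notMem fun h => hirr u (mem_filter.mp h).2]
  have hv_nbrs : (S.erase u).filter (r v) = ∅ :=
    filter_eq_empty_iff.mpr fun w hw hvw => ne_of_mem_erase hw (hnbr w (mem_of_mem_erase hw) hvw)
  rw [hu_nbrs] at hremove
  rw [hv_nbrs, card_empty] at hadd
  omega

end AdjPairs

section BoxProduct

variable {α β : Type*}

def boxRel (rA : α → α → Prop) (rB : β → β → Prop) (p q : α × β) : Prop :=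
  rA p.1 q.1 ∧ p.2 = q.2 ∨ p.1 = q.1 ∧ rB p.2 q.2

variable {rA : α → α → Prop} {rB : β → β → Prop} {A : Finset α} {B : Finset β}

lemma card_filter_boxRel [DecidableEq α] [DecidableEq β] (hirr : ∀ a, ¬ rA a a)
    {a : α} {b : β} (ha : a ∈ A) (hb : b ∈ B) :
    #((A ×ˢ B).filter (boxRel rA rB (a, b))) = #(A.filter (rA a)) + #(B.filter (rB b)) := by
  have hsplit : (A ×ˢ B).filter (boxRel rA rB (a, b)) =
      A.filter (rA a) ×ˢ {b} ∪ {a} ×ˢ B.filter (rB b) := by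
    ext ⟨c, d⟩
    simp only [boxRel, mem_filter, mem_product, mem_union, mem_singleton]
    constructor
    · rintro ⟨⟨hc, hd⟩, ⟨h, rfl⟩ | ⟨rfl, h⟩⟩
      exacts [Or.inl ⟨⟨hc, h⟩, rfl⟩, Or.inr ⟨rfl, hd, h⟩]
    · rintro (⟨⟨hc, h⟩, rfl⟩ | ⟨rfl, hd, h⟩)
      exacts [⟨⟨hc, hb⟩, Or.inl ⟨h, rfl⟩⟩, ⟨⟨ha, hd⟩, Or.inr ⟨rfl, h⟩⟩]
  have hdisj : Disjoint (A.filter (rA a) ×ˢ {b}) ({a} ×ˢ B.filter (rB b)) := by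
    simp only [disjoint_left, mem_product, mem_filter, mem_singleton]
    rintro ⟨c, d⟩ ⟨⟨_, h⟩, _⟩ ⟨rfl, _⟩
    exact hirr _ h
  rw [hsplit, card_union_of_disjoint hdisj, card_product, card_product, card_singleton,
    card_singleton, mul_one, one_mul]

lemma card_adjPairs_boxRel [DecidableEq α] [DecidableEq β] (hirr : ∀ a, ¬ rA a a) :
    #(adjPairs (boxRel rA rB) (A ×ˢ B)) = #(adjPairs rA A) * #B + #A * #(adjPairs rB B) := by
  rw [card_adjPairs_eq_sum, sum_product,
    sum_congr rfl fun a ha => sum_congr rfl fun b hb => card_filter_boxRel hirr ha hb]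
  simp only [sum_add_distrib, sum_const, smul_eq_mul, card_adjPairs_eq_sum]
  rw [← mul_sum]
  ring

lemma eq_of_boxRel_of_notMem_product
    (hA : ∀ a ∉ A, ∀ b ∈ A, ∀ b' ∈ A, rA a b → rA a b' → b = b')
    (hB : ∀ a ∉ B, ∀ b ∈ B, ∀ b' ∈ B, rB a b → rB a b' → b = b')
    {p q q' : α × β} (hp : p ∉ A ×ˢ B) (hq : q ∈ A ×ˢ B) (hq' : q' ∈ A ×ˢ B)
    (h : boxRel rA rB p q) (h' : boxRel rA rB p q') : q = q' := by
  obtain ⟨a, b⟩ := p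
  obtain ⟨c, d⟩ := q
  obtain ⟨c', d'⟩ := q'
  simp only [mem_product] at hp hq hq'
  simp only [boxRel] at h h'
  rcases h with ⟨h, rfl⟩ | ⟨rfl, h⟩ <;> rcases h' with ⟨h', rfl⟩ | ⟨rfl, h'⟩
  · rw [hA a (fun ha => hp ⟨ha, hq.2⟩) c hq.1 c' hq'.1 h h']
  · exact absurd ⟨hq'.1, hq.2⟩ hp
  · exact absurd ⟨hq.1, hq'.2⟩ hp
  · rw [hB b (fun hb => hp ⟨hq.1, hb⟩) d hq.2 d' hq'.2 h h']

end BoxProduct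

section Ring

variable {L : ℕ}

def ringAdj (L : ℕ) (a b : ZMod L) : Prop :=
  a - b = 1 ∨ a - b = -1

lemma ringAdj_iff {a b : ZMod L} : ringAdj L a b ↔ b = a - 1 ∨ b = a + 1 := by
  unfold ringAdj
  constructor <;> rintro (h | h)
  exacts [Or.inl (by linear_combination -h), Or.inr (by linear_combination -h),
    Or.inl (by linear_combination -h), Or.inr (by linear_combination -h)]

lemma ringAdj_symm (a b : ZMod L) (h : ringAdj L a b) : ringAdj L b a := by
  rw [ringAdj_iff] at h
  rcases h with rfl | rfl
  exacts [Or.inr (by ring), Or.inl (by ring)]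

lemma ringAdj_irrefl (hL : L ≠ 1) (a : ZMod L) : ¬ ringAdj L a a := by
  have := ZMod.nontrivial_iff.mpr hL
  simp [ringAdj, eq_comm (a := (0 : ZMod L))]

lemma natCast_inj_of_lt {i j : ℕ} (hi : i < L) (hj : j < L) :
    (i : ZMod L) = j ↔ i = j := by
  rw [ZMod.natCast_eq_natCast_iff', Nat.mod_eq_of_lt hi, Nat.mod_eq_of_lt hj]

def arc (c : ZMod L) (n : ℕ) : Finset (ZMod L) :=
  (range n).image fun i : ℕ => c + (i : ZMod L)

lemma mem_arc {a c : ZMod L} {n : ℕ} : a ∈ arc c n ↔ ∃ i < n, c + i = a := by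
  simp only [arc, mem_image, mem_range]

lemma add_natCast_mem_arc {c : ZMod L} {i n : ℕ} (hi : i < L) (hn : n ≤ L) :
    c + (i : ZMod L) ∈ arc c n ↔ i < n := by
  simp only [mem_arc, add_right_inj]
  constructor
  · rintro ⟨j, hj, h⟩
    rwa [← (natCast_inj_of_lt (hj.trans_le hn) hi).mp h]
  · exact fun h => ⟨i, h, rfl⟩

lemma card_arc (c : ZMod L) {n : ℕ} (hn : n ≤ L) : #(arc c n) = n := by
  rw [arc, card_image_of_injOn, card_range]
  intro i hi j hj h
  simp only [coe_range, Set.mem_Iio] at hi hj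
  exact (natCast_inj_of_lt (hi.trans_le hn) (hj.trans_le hn)).mp (add_left_cancel h)

lemma arc_succ (c : ZMod L) (m : ℕ) : arc c (m + 1) = insert (c + m) (arc c m) := by
  rw [arc, range_add_one, image_insert, arc]

lemma filter_ringAdj_arc_succ {c : ZMod L} {m : ℕ} (hm : 1 ≤ m) (hmL : m + 2 ≤ L) :
    (arc c m).filter (ringAdj L (c + m)) = {c + ((m - 1 : ℕ) : ZMod L)} := by
  have hpred : c + (m : ZMod L) - 1 = c + ((m - 1 : ℕ) : ZMod L) := by
    rw [Nat.cast_sub hm]; push_cast; ring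
  have hsucc : c + (m : ZMod L) + 1 = c + ((m + 1 : ℕ) : ZMod L) := by
    push_cast; ring
  ext b
  simp only [mem_filter, mem_singleton, ringAdj_iff, hpred, hsucc]
  constructor
  · rintro ⟨hb, rfl | rfl⟩
    · rfl
    · exact absurd ((add_natCast_mem_arc (by omega) (by omega)).mp hb) (by omega)
  · rintro rfl
    exact ⟨(add_natCast_mem_arc (by omega) (by omega)).mpr (by omega), Or.inl rfl⟩

lemma card_adjPairs_arc (c : ZMod L) {n : ℕ} (hn : n < L) :
    #(adjPairs (ringAdj L) (arc c n)) = 2 * (n - 1) := by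
  induction n with
  | zero => simp [arc, adjPairs]
  | succ m ih =>
    have hnew : c + (m : ZMod L) ∉ arc c m := fun h =>
      lt_irrefl m ((add_natCast_mem_arc (by omega) (by omega)).mp h)
    rw [arc_succ, card_adjPairs_insert ringAdj_symm (ringAdj_irrefl (by omega)) hnew,
      ih (by omega)]
    rcases Nat.eq_zero_or_pos m with rfl | hm
    · simp [arc]
    · rw [filter_ringAdj_arc_succ hm (by omega), card_singleton]
      omega

lemma mem_arc_of_sub_one_mem_of_add_one_mem {a c : ZMod L} {n : ℕ} (hn : n + 2 ≤ L)
    (hpred : a - 1 ∈ arc c n) (hsucc : a + 1 ∈ arc c n) : a ∈ arc c n := by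
  obtain ⟨i, hi, hai⟩ := mem_arc.mp hpred
  have ha : a = c + ((i + 1 : ℕ) : ZMod L) := by push_cast; linear_combination -hai
  have ha' : a + 1 = c + ((i + 2 : ℕ) : ZMod L) := by push_cast; linear_combination -hai
  rw [ha', add_natCast_mem_arc (by omega) (by omega)] at hsucc
  rw [ha, add_natCast_mem_arc (by omega) (by omega)]
  omega

lemma eq_of_ringAdj_of_notMem_arc {a b b' c : ZMod L} {n : ℕ} (hn : n + 2 ≤ L)
    (ha : a ∉ arc c n) (hb : b ∈ arc c n) (hb' : b' ∈ arc c n)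
    (h : ringAdj L a b) (h' : ringAdj L a b') : b = b' := by
  rw [ringAdj_iff] at h h'
  rcases h with rfl | rfl <;> rcases h' with rfl | rfl
  · rfl
  · exact absurd (mem_arc_of_sub_one_mem_of_add_one_mem hn hb hb') ha
  · exact absurd (mem_arc_of_sub_one_mem_of_add_one_mem hn hb' hb) ha
  · rfl

lemma exists_ringAdj_mem_arc {a c : ZMod L} {n : ℕ} (hn : 2 ≤ n) (ha : a ∈ arc c n) :
    ∃ b ∈ arc c n, ringAdj L a b := by
  obtain ⟨i, hi, rfl⟩ := mem_arc.mp ha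
  by_cases hlast : i + 1 < n
  · refine ⟨c + ((i + 1 : ℕ) : ZMod L), mem_arc.mpr ⟨i + 1, hlast, rfl⟩, ?_⟩
    exact ringAdj_iff.mpr (Or.inr (by push_cast; ring))
  · refine ⟨c + ((i - 1 : ℕ) : ZMod L), mem_arc.mpr ⟨i - 1, by omega, rfl⟩, ?_⟩
    exact ringAdj_iff.mpr (Or.inl (by rw [Nat.cast_sub (by omega)]; push_cast; ring))

end Ring

section Torus

variable {L : ℕ}

lemma torusAdj_eq_boxRel : torusAdj L = boxRel (ringAdj L) (ringAdj L) := by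
  ext u v
  simp only [torusAdj, boxRel, ringAdj, Prod.ext_iff, Prod.fst_sub, Prod.snd_sub, sub_eq_zero]
  tauto

lemma torusAdj_symm (u v : Site L) (h : torusAdj L u v) : torusAdj L v u := by
  rw [torusAdj_eq_boxRel] at h ⊢
  rcases h with ⟨h, e⟩ | ⟨e, h⟩
  exacts [Or.inl ⟨ringAdj_symm _ _ h, e.symm⟩, Or.inr ⟨e.symm, ringAdj_symm _ _ h⟩]

lemma torusAdj_irrefl (hL : L ≠ 1) (u : Site L) : ¬ torusAdj L u u := by
  rw [torusAdj_eq_boxRel]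
  rintro (⟨h, -⟩ | ⟨-, h⟩) <;> exact ringAdj_irrefl hL _ h

lemma squareSet_eq_arc_product (n : ℕ) (x : Site L) :
    squareSet L n x = arc x.1 n ×ˢ arc x.2 n := by
  rw [squareSet, arc, arc, ← prodMap_image_product]
  rfl

lemma card_adjPairs_squareSet {n : ℕ} (hn : n < L) (x : Site L) :
    #(adjPairs (torusAdj L) (squareSet L n x)) = 4 * (n * (n - 1)) := by
  rcases Nat.eq_zero_or_pos n with rfl | hpos
  · simp [squareSet, adjPairs]
  rw [torusAdj_eq_boxRel, squareSet_eq_arc_product,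
    card_adjPairs_boxRel (ringAdj_irrefl (by omega)), card_adjPairs_arc _ hn,
    card_adjPairs_arc _ hn, card_arc _ hn.le, card_arc _ hn.le]
  ring

lemma two_le_card_filter_torusAdj_squareSet {n : ℕ} (hn : 2 ≤ n) (hL : L ≠ 1) {x u : Site L}
    (hu : u ∈ squareSet L n x) : 2 ≤ #((squareSet L n x).filter (torusAdj L u)) := by
  obtain ⟨a, b⟩ := u
  rw [squareSet_eq_arc_product, mem_product] at hu
  rw [squareSet_eq_arc_product, torusAdj_eq_boxRel,
    card_filter_boxRel (ringAdj_irrefl hL) hu.1 hu.2]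
  obtain ⟨a', ha', haa'⟩ := exists_ringAdj_mem_arc hn hu.1
  obtain ⟨b', hb', hbb'⟩ := exists_ringAdj_mem_arc hn hu.2
  have := card_pos.mpr ⟨a', mem_filter.mpr ⟨ha', haa'⟩⟩
  have := card_pos.mpr ⟨b', mem_filter.mpr ⟨hb', hbb'⟩⟩
  omega

lemma eq_of_torusAdj_of_notMem_squareSet {n : ℕ} (hn : n + 2 ≤ L) {x v w w' : Site L}
    (hv : v ∉ squareSet L n x) (hw : w ∈ squareSet L n x) (hw' : w' ∈ squareSet L n x)
    (h : torusAdj L v w) (h' : torusAdj L v w') : w = w' := by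
  rw [squareSet_eq_arc_product] at hv hw hw'
  rw [torusAdj_eq_boxRel] at h h'
  exact eq_of_boxRel_of_notMem_product
    (fun a ha b hb b' hb' => eq_of_ringAdj_of_notMem_arc (a := a) hn ha hb hb')
    (fun a ha b hb b' hb' => eq_of_ringAdj_of_notMem_arc (a := a) hn ha hb hb') hv hw hw' h h'

end Torus

lemma torusE_eq {L : ℕ} (S : Finset (Site L)) : torusE L S = #(adjPairs (torusAdj L) S) / 2 :=
  rfl

lemma swapConf_comm {L : ℕ} (η : Config L) (u v : Site L) :
    swapConf L η u v = swapConf L η v u := by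
  funext z
  unfold swapConf
  split_ifs <;> simp_all

section Configurations

variable {L : ℕ} [NeZero L]

lemma occupied_squareConf (n : ℕ) (x : Site L) :
    occupied L (squareConf L n x) = squareSet L n x := by
  ext z
  simp [occupied, squareConf]

lemma occupied_swapConf {η : Config L} {u v : Site L} (hu : η u = true) (hv : η v = false) :
    occupied L (swapConf L η u v) = insert v ((occupied L η).erase u) := by
  ext z
  simp only [occupied, swapConf, mem_filter, mem_univ, true_and, mem_insert, mem_erase]
  by_cases hzu : z = u <;> by_cases hzv : z = v <;> simp_all

end Configurations

/-- every nontrivial single particle move from a square configuration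
raises the energy by at least `2`; moreover `H(η^x) = −2n(n−1)`. -/
theorem square_move_energy (n L : ℕ) [NeZero L] (hn : 4 ≤ n) (hL : 2 * n < L)
    (x u v : Site L) (huv : torusAdj L u v)
    (hne : squareConf L n x u ≠ squareConf L n x v) :
    confH L (squareConf L n x) + 2 ≤ confH L (swapConf L (squareConf L n x) u v)
    ∧ confH L (squareConf L n x) = -(2 * (n : ℤ) * ((n : ℤ) - 1)) := by
  have hQ := card_adjPairs_squareSet (by omega : n < L) x
  refine ⟨?_, ?_⟩
  · wlog hu : squareConf L n x u = true generalizing u v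
    · rw [swapConf_comm]
      exact this v u (torusAdj_symm u v huv) hne.symm (by simp_all)
    have hv : squareConf L n x v = false := by simp_all
    have hu' : u ∈ squareSet L n x := by simpa [squareConf] using hu
    have hv' : v ∉ squareSet L n x := by simpa [squareConf] using hv
    have hdrop := card_adjPairs_insert_erase_add_four_le torusAdj_symm
      (torusAdj_irrefl (by omega)) hu' hv'
      (two_le_card_filter_torusAdj_squareSet (by omega) (by omega) hu')
      fun w hw hvw => eq_of_torusAdj_of_notMem_squareSet (by omega) hv' hw hu' hvw
        (torusAdj_symm u v huv)
    rw [confH, confH, occupied_swapConf hu hv, occupied_squareConf, torusE_eq, torusE_eq]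
    omega
  · rw [confH, occupied_squareConf, torusE_eq, hQ,
      show 4 * (n * (n - 1)) / 2 = 2 * (n * (n - 1)) by omega]
    push_cast [Nat.cast_sub (by omega : 1 ≤ n)]
    ring
end
end

section
/- Let L ≥ 3 and let S ⊆ Λ_L. Suppose there exist k₀, j₀ ∈ ZMod L such that the column {k₀} × ZMod L and the row ZMod L × {j₀} are both disjoint from S. Then there exists a finite set S' ⊆ ℤ² with |S'| = |S| and e_{ℤ²}(S') = e_{Λ_L}(S): a torus configuration avoiding a full row and a full column can be transported to the planar lattice without changing the number of adjacent occupied pairs. -/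
open scoped Classical

noncomputable section

lemma key_one {L : ℕ} [NeZero L] (x y : ZMod L) (hx : x ≠ 0) (hy : y ≠ 0) :
    x - y = 1 ↔ (x.val : ℤ) - y.val = 1 := by
  have hx' : x.val < L := x.val_lt
  have hy' : y.val < L := y.val_lt
  have hx1 : x.val ≠ 0 := fun h => hx ((ZMod.val_eq_zero x).1 h)
  have hy1 : y.val ≠ 0 := fun h => hy ((ZMod.val_eq_zero y).1 h)
  constructor
  · intro h
    have hcast : (((x.val : ℤ) - y.val : ℤ) : ZMod L) = ((1 : ℤ) : ZMod L) := by
      push_cast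
      rw [ZMod.natCast_val, ZMod.natCast_val, ZMod.cast_id, ZMod.cast_id, h]
    have hmod := (ZMod.intCast_eq_intCast_iff _ _ _).1 hcast
    have hdvd : (L : ℤ) ∣ ((x.val : ℤ) - y.val - 1) := Int.ModEq.dvd hmod.symm
    have := Int.eq_zero_of_abs_lt_dvd hdvd (by rw [abs_lt]; omega)
    omega
  · intro h
    have : x - y = (((x.val : ℤ) - y.val : ℤ) : ZMod L) := by
      push_cast
      rw [ZMod.natCast_val, ZMod.natCast_val, ZMod.cast_id, ZMod.cast_id]
    rw [this, h]; norm_num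

lemma key_zero {L : ℕ} [NeZero L] (x y : ZMod L) :
    x - y = 0 ↔ (x.val : ℤ) - y.val = 0 := by
  rw [sub_eq_zero, sub_eq_zero]
  constructor
  · rintro rfl; rfl
  · intro h
    exact ZMod.val_injective L (by exact_mod_cast h)

lemma key_negone {L : ℕ} [NeZero L] (x y : ZMod L) (hx : x ≠ 0) (hy : y ≠ 0) :
    x - y = -1 ↔ (x.val : ℤ) - y.val = -1 := by
  have h := key_one y x hy hx
  have hsw : x - y = -1 ↔ y - x = 1 := by
    constructor <;> intro h' <;> linear_combination -h'
  rw [hsw, h]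
  omega


/-- a torus configuration avoiding a full column `{k₀} × ZMod L` and a
full row `ZMod L × {j₀}` can be transported to the planar lattice `ℤ²` without changing
the number of particles nor the number of adjacent occupied pairs. -/
theorem torus_to_plane (L : ℕ) (hL : 3 ≤ L) (S : Finset (Site L)) (k₀ j₀ : ZMod L)
    (hcol : ∀ j : ZMod L, (k₀, j) ∉ S) (hrow : ∀ k : ZMod L, (k, j₀) ∉ S) :
    ∃ S' : Finset (ℤ × ℤ), S'.card = S.card ∧ planeE S' = torusE L S := by
  haveI : NeZero L := ⟨by omega⟩
  set f : Site L → ℤ × ℤ := fun u => (((u.1 - k₀).val : ℤ), ((u.2 - j₀).val : ℤ)) with hf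
  have hfinj : Function.Injective f := by
    intro u v h
    simp only [hf, Prod.mk.injEq] at h
    have h1 : (u.1 - k₀).val = (v.1 - k₀).val := by exact_mod_cast h.1
    have h2 : (u.2 - j₀).val = (v.2 - j₀).val := by exact_mod_cast h.2
    have e1 := ZMod.val_injective L h1
    have e2 := ZMod.val_injective L h2
    have : u.1 = v.1 := by linear_combination e1
    have : u.2 = v.2 := by linear_combination e2
    exact Prod.ext ‹u.1 = v.1› ‹u.2 = v.2›
  have hadj : ∀ u ∈ S, ∀ v ∈ S, (torusAdj L u v ↔ planeAdj (f u) (f v)) := by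
    intro u hu v hv
    have hu1 : u.1 - k₀ ≠ 0 := by
      intro h; apply hcol u.2
      have : u.1 = k₀ := by linear_combination h
      rwa [← this, Prod.mk.eta]
    have hu2 : u.2 - j₀ ≠ 0 := by
      intro h; apply hrow u.1
      have : u.2 = j₀ := by linear_combination h
      rwa [← this, Prod.mk.eta]
    have hv1 : v.1 - k₀ ≠ 0 := by
      intro h; apply hcol v.2
      have : v.1 = k₀ := by linear_combination h
      rwa [← this, Prod.mk.eta]
    have hv2 : v.2 - j₀ ≠ 0 := by
      intro h; apply hrow v.1
      have : v.2 = j₀ := by linear_combination h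
      rwa [← this, Prod.mk.eta]
    have e1 : u.1 - v.1 = (u.1 - k₀) - (v.1 - k₀) := by ring
    have e2 : u.2 - v.2 = (u.2 - j₀) - (v.2 - j₀) := by ring
    have k1 := key_one (u.1 - k₀) (v.1 - k₀) hu1 hv1
    have k1' := key_negone (u.1 - k₀) (v.1 - k₀) hu1 hv1
    have k10 := key_zero (u.1 - k₀) (v.1 - k₀)
    have k2 := key_one (u.2 - j₀) (v.2 - j₀) hu2 hv2
    have k2' := key_negone (u.2 - j₀) (v.2 - j₀) hu2 hv2
    have k20 := key_zero (u.2 - j₀) (v.2 - j₀)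
    simp only [torusAdj, planeAdj, Prod.ext_iff, Prod.fst_sub, Prod.snd_sub, hf]
    constructor
    · rintro (⟨h1, h2⟩ | ⟨h1, h2⟩ | ⟨h1, h2⟩ | ⟨h1, h2⟩)
      · exact Or.inl ⟨k1.1 (by rw [← e1]; exact h1), k20.1 (by rw [← e2]; exact h2)⟩
      · exact Or.inr (Or.inl ⟨k1'.1 (by rw [← e1]; exact h1), k20.1 (by rw [← e2]; exact h2)⟩)
      · exact Or.inr (Or.inr (Or.inl ⟨k10.1 (by rw [← e1]; exact h1), k2.1 (by rw [← e2]; exact h2)⟩))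
      · exact Or.inr (Or.inr (Or.inr ⟨k10.1 (by rw [← e1]; exact h1), k2'.1 (by rw [← e2]; exact h2)⟩))
    · rintro (⟨h1, h2⟩ | ⟨h1, h2⟩ | ⟨h1, h2⟩ | ⟨h1, h2⟩)
      · exact Or.inl ⟨by rw [e1]; exact k1.2 h1, by rw [e2]; exact k20.2 h2⟩
      · exact Or.inr (Or.inl ⟨by rw [e1]; exact k1'.2 h1, by rw [e2]; exact k20.2 h2⟩)
      · exact Or.inr (Or.inr (Or.inl ⟨by rw [e1]; exact k10.2 h1, by rw [e2]; exact k2.2 h2⟩))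
      · exact Or.inr (Or.inr (Or.inr ⟨by rw [e1]; exact k10.2 h1, by rw [e2]; exact k2'.2 h2⟩))
  refine ⟨S.image f, Finset.card_image_of_injective S hfinj, ?_⟩
  unfold planeE torusE
  congr 1
  have himg : ((S.image f) ×ˢ (S.image f)).filter (fun p => planeAdj p.1 p.2)
      = ((S ×ˢ S).filter fun p => torusAdj L p.1 p.2).image (fun p => (f p.1, f p.2)) := by
    ext p
    simp only [Finset.mem_filter, Finset.mem_product, Finset.mem_image]
    constructor
    · rintro ⟨⟨⟨u, hu, h1⟩, ⟨v, hv, h2⟩⟩, hadj'⟩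
      refine ⟨(u, v), ⟨⟨hu, hv⟩, (hadj u hu v hv).2 ?_⟩, ?_⟩
      · rw [h1, h2]; exact hadj'
      · rw [h1, h2]
    · rintro ⟨⟨u, v⟩, ⟨⟨hu, hv⟩, ht⟩, rfl⟩
      exact ⟨⟨⟨u, hu, rfl⟩, ⟨v, hv, rfl⟩⟩, (hadj u hu v hv).1 ht⟩
  rw [himg]
  exact Finset.card_image_of_injective _ (fun p q h => by
    simp only [Prod.mk.injEq] at h
    exact Prod.ext (hfinj h.1) (hfinj h.2))
end
end
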